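/- Let $H$ be the graph obtained from $K_4$ by subdividing one edge, and let $G^*$ be formed from three disjoint copies of $H$ by adding a new vertex $v$ adjacent to the degree-2 vertex of each copy. Then $G^*$ is 3-regular and has no MED decomposition. -/

import Mathlib

/-!
Label every edge by the part of the decomposition containing it. At a vertex of degree 3 the
labels are, up to order, (matching, cycle, cycle), (star, cycle, cycle) or (star, star, star),
the last exactly at double-star centers, and a center has exactly one center among its
neighbours. In each copy of the subdivided `K₄` these local rules, together with the absence
of odd cycles, force the subdivision vertex to be a center whose star contains its edge to `v`.
Then `v` is a center with three center neighbours, which is impossible.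
-/

/-- Two edges are incident if they share a vertex. -/
def EdgeIncident {V : Type*} (e f : Sym2 V) : Prop := ∃ v, v ∈ e ∧ v ∈ f

/-- `G` is `(r,s)`-edge-choosable: from any assignment of `r`-element lists to the edges one can
select `s` colors per edge from its list so that incident edges receive disjoint sets. -/
def EdgeChoosable {V : Type*} (G : SimpleGraph V) (r s : ℕ) : Prop :=
  ∀ L : Sym2 V → Finset ℕ, (∀ e ∈ G.edgeSet, (L e).card = r) →
    ∃ C : Sym2 V → Finset ℕ,
      (∀ e ∈ G.edgeSet, C e ⊆ L e ∧ (C e).card = s) ∧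
      ∀ e ∈ G.edgeSet, ∀ f ∈ G.edgeSet, e ≠ f → EdgeIncident e f → Disjoint (C e) (C f)

/-- Degree of a vertex, measured as the number of its neighbors. -/
noncomputable def edeg {V : Type*} (H : SimpleGraph V) (v : V) : ℕ := (H.neighborSet v).ncard

/-- A set of edges forming a matching: pairwise non-incident edges. -/
def IsMatchingSet {V : Type*} (E₁ : Set (Sym2 V)) : Prop :=
  ∀ e ∈ E₁, ∀ f ∈ E₁, e ≠ f → ¬ EdgeIncident e f

/-- The edge set `E₂` forms a disjoint union of even cycles: every vertex touched by `E₂`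
has exactly two incident edges of `E₂`, and each component has evenly many vertices. -/
def IsEvenCyclesSet {V : Type*} (E₂ : Set (Sym2 V)) : Prop :=
  (∀ v ∈ (SimpleGraph.fromEdgeSet E₂).support, edeg (SimpleGraph.fromEdgeSet E₂) v = 2) ∧
  (∀ v ∈ (SimpleGraph.fromEdgeSet E₂).support,
    Even ((((SimpleGraph.fromEdgeSet E₂).connectedComponentMk v).supp).ncard))

/-- The edge set `E₃` forms vertex-disjoint double-stars (6-vertex trees with two adjacent
degree-3 centers, each with two leaves) whose leaves are independent in `G`. -/
def IsDoubleStarsSet {V : Type*} (G : SimpleGraph V) (E₃ : Set (Sym2 V)) : Prop :=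
  let H := SimpleGraph.fromEdgeSet E₃
  (∀ v ∈ H.support, edeg H v = 1 ∨ edeg H v = 3) ∧
  (∀ v ∈ H.support, edeg H v = 3 → ({u | u ∈ H.neighborSet v ∧ edeg H u = 3}).ncard = 1) ∧
  (∀ v ∈ H.support, edeg H v = 1 → ∀ u, H.Adj v u → edeg H u = 3) ∧
  (∀ u v, u ∈ H.support → v ∈ H.support → edeg H u = 1 → edeg H v = 1 → ¬ G.Adj u v)

/-- A MED decomposition of `G`: a partition of its edge set into a matching `E₁`,
a disjoint union of even cycles `E₂`, and independent double-stars `E₃`. -/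
def IsMEDDecomposition {V : Type*} (G : SimpleGraph V) (E₁ E₂ E₃ : Set (Sym2 V)) : Prop :=
  E₁ ∪ E₂ ∪ E₃ = G.edgeSet ∧
  Disjoint E₁ E₂ ∧ Disjoint E₁ E₃ ∧ Disjoint E₂ E₃ ∧
  IsMatchingSet E₁ ∧ IsEvenCyclesSet E₂ ∧ IsDoubleStarsSet G E₃

/-- `G*`: three disjoint copies of `K₄`-with-one-edge-subdivided (copy `j` on vertices
`5j,…,5j+4` with subdivision vertex `5j+4`), plus a new vertex `15` adjacent to the three
subdivision vertices. -/
def Gstar : SimpleGraph (Fin 16) := SimpleGraph.fromEdgeSet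
  {s(0, 2), s(0, 3), s(1, 2), s(1, 3), s(2, 3), s(0, 4), s(1, 4),
   s(5, 7), s(5, 8), s(6, 7), s(6, 8), s(7, 8), s(5, 9), s(6, 9),
   s(10, 12), s(10, 13), s(11, 12), s(11, 13), s(12, 13), s(10, 14), s(11, 14),
   s(4, 15), s(9, 15), s(14, 15)}

namespace SimpleGraph

variable {V : Type*}

theorem edeg_eq_degree (G : SimpleGraph V) (v : V) [Fintype (G.neighborSet v)] :
    edeg G v = G.degree v := by
  rw [edeg, Set.ncard_eq_toFinset_card']
  rfl

theorem edeg_eq_zero_of_notMem_support {H : SimpleGraph V} {v : V} (hv : v ∉ H.support) :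
    edeg H v = 0 := by
  have hempty : H.neighborSet v = ∅ := Set.eq_empty_of_forall_notMem fun u hu => hv ⟨u, hu⟩
  rw [edeg, hempty, Set.ncard_empty]

theorem neighborSet_fromEdgeSet_of_subset {G : SimpleGraph V} {E : Set (Sym2 V)}
    (hE : E ⊆ G.edgeSet) (v : V) :
    (fromEdgeSet E).neighborSet v = {u ∈ G.neighborSet v | s(v, u) ∈ E} := by
  ext u
  simp only [mem_neighborSet, fromEdgeSet_adj]
  exact ⟨fun h => ⟨hE h.1, h.1⟩, fun h => ⟨h.2, h.1.ne⟩⟩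

theorem neighborSet_eq_pair_of_edeg_eq_two {H : SimpleGraph V} {u n n' : V}
    (hu : edeg H u = 2) (hne : n ≠ n') (hn : H.Adj u n) (hn' : H.Adj u n') :
    H.neighborSet u = {n, n'} := by
  have hfin : (H.neighborSet u).Finite := Set.finite_of_ncard_ne_zero (by unfold edeg at hu; omega)
  symm
  refine Set.eq_of_subset_of_ncard_le (Set.pair_subset hn hn') ?_ hfin
  rw [Set.ncard_pair hne]
  exact hu.le

end SimpleGraph

open SimpleGraph

theorem Set.ncard_sep_triple {α : Type*} {x y z : α} (hxy : x ≠ y) (hxz : x ≠ z) (hyz : y ≠ z)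
    (P : α → Prop) [DecidablePred P] :
    {u ∈ ({x, y, z} : Set α) | P u}.ncard =
      (if P x then 1 else 0) + (if P y then 1 else 0) + (if P z then 1 else 0) := by
  classical
  have hfin : {u ∈ ({x, y, z} : Set α) | P u} = ↑(({x, y, z} : Finset α).filter P) := by
    ext; simp
  rw [hfin, Set.ncard_coe_finset, Finset.card_filter, Finset.sum_insert (by simp [hxy, hxz]),
    Finset.sum_pair hyz, add_assoc]

section Parts

variable {V : Type*} {E : Set (Sym2 V)}

theorem IsMatchingSet.edeg_le_one (hE : IsMatchingSet E) (v : V) :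
    edeg (fromEdgeSet E) v ≤ 1 := by
  have hsub : ((fromEdgeSet E).neighborSet v).Subsingleton := by
    intro u hu u' hu'
    rw [mem_neighborSet, fromEdgeSet_adj] at hu hu'
    by_contra hne
    have hedge : s(v, u) ≠ s(v, u') := fun h => hne (Sym2.congr_right.mp h)
    exact hE _ hu.1 _ hu'.1 hedge ⟨v, Sym2.mem_mk_left v u, Sym2.mem_mk_left v u'⟩
  rw [edeg, Set.ncard_le_one_iff_eq hsub.finite]
  exact hsub.eq_empty_or_singleton

theorem IsEvenCyclesSet.edeg_eq_zero_or_two (hE : IsEvenCyclesSet E) (v : V) :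
    edeg (fromEdgeSet E) v = 0 ∨ edeg (fromEdgeSet E) v = 2 := by
  by_cases hv : v ∈ (fromEdgeSet E).support
  · exact Or.inr (hE.1 v hv)
  · exact Or.inl (edeg_eq_zero_of_notMem_support hv)

theorem IsDoubleStarsSet.edeg_eq_zero_or_one_or_three {G : SimpleGraph V}
    (hE : IsDoubleStarsSet G E) (v : V) :
    edeg (fromEdgeSet E) v = 0 ∨ edeg (fromEdgeSet E) v = 1 ∨ edeg (fromEdgeSet E) v = 3 := by
  by_cases hv : v ∈ (fromEdgeSet E).support
  · exact Or.inr (hE.1 v hv)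
  · exact Or.inl (edeg_eq_zero_of_notMem_support hv)

theorem IsDoubleStarsSet.not_three_center_neighbors {G : SimpleGraph V}
    (hE : IsDoubleStarsSet G E) {w x y z : V} (hxy : x ≠ y) (hxz : x ≠ z) (hyz : y ≠ z)
    (hx : (fromEdgeSet E).Adj w x) (hy : (fromEdgeSet E).Adj w y) (hz : (fromEdgeSet E).Adj w z)
    (hx3 : edeg (fromEdgeSet E) x = 3) (hy3 : edeg (fromEdgeSet E) y = 3)
    (hz3 : edeg (fromEdgeSet E) z = 3) : False := by
  set H := fromEdgeSet E
  have hw : w ∈ H.support := ⟨x, hx⟩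
  have hxyz : ({x, y, z} : Set V).ncard = 3 := Set.ncard_eq_three.mpr ⟨x, y, z, hxy, hxz, hyz, rfl⟩
  have hdeg : edeg H w = 1 ∨ edeg H w = 3 := hE.1 w hw
  have hfin : (H.neighborSet w).Finite := by
    apply Set.finite_of_ncard_ne_zero
    unfold edeg at hdeg
    omega
  have hcenters : {x, y, z} ⊆ {u | u ∈ H.neighborSet w ∧ edeg H u = 3} := by
    rintro u (rfl | rfl | rfl) <;> simp_all
  have hw3 : edeg H w = 3 := by
    have := Set.ncard_le_ncard (hcenters.trans fun u hu => hu.1) hfin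
    rw [hxyz] at this
    unfold edeg at hdeg ⊢
    omega
  have := Set.ncard_le_ncard hcenters (hfin.subset fun u hu => hu.1)
  rw [hE.2.1 w hw hw3, hxyz] at this
  omega

end Parts

section Cycles

variable {V : Type*}

/-- The cycle `v₀ v₁ v₂ v₃ v₄` would be a whole component of the 2-regular graph, of odd size. -/
theorem IsEvenCyclesSet.not_five_cycle {E : Set (Sym2 V)} (hE : IsEvenCyclesSet E)
    {v₀ v₁ v₂ v₃ v₄ : V} (hnd : [v₀, v₁, v₂, v₃, v₄].Nodup)
    (h₀₁ : (fromEdgeSet E).Adj v₀ v₁) (h₁₂ : (fromEdgeSet E).Adj v₁ v₂)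
    (h₂₃ : (fromEdgeSet E).Adj v₂ v₃) (h₃₄ : (fromEdgeSet E).Adj v₃ v₄)
    (h₄₀ : (fromEdgeSet E).Adj v₄ v₀) : False := by
  classical
  set H := fromEdgeSet E
  set S : Set V := {v | v ∈ [v₀, v₁, v₂, v₃, v₄]}
  have hS : ∀ {v}, v ∈ S ↔ v = v₀ ∨ v = v₁ ∨ v = v₂ ∨ v = v₃ ∨ v = v₄ := by simp [S]
  have hne := hnd
  simp only [List.nodup_cons, List.mem_cons, List.not_mem_nil, not_or] at hne
  obtain ⟨⟨-, h₀₂, h₀₃, -, -⟩, ⟨-, h₁₃, h₁₄, -⟩, ⟨-, h₂₄, -⟩, -⟩ := hne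
  have hstep : ∀ {u n n'}, n ∈ S → n' ∈ S → n ≠ n' → H.Adj u n → H.Adj u n' →
      ∀ u', H.Adj u u' → u' ∈ S := by
    intro u n n' hn hn' hnn' ha ha' u' hu'
    have hu' : u' ∈ H.neighborSet u := hu'
    rw [neighborSet_eq_pair_of_edeg_eq_two (hE.1 u ⟨n, ha⟩) hnn' ha ha'] at hu'
    rcases hu' with rfl | rfl <;> assumption
  have hclosed : ∀ u ∈ S, ∀ u', H.Adj u u' → u' ∈ S := by
    intro u hu
    rcases hS.mp hu with rfl | rfl | rfl | rfl | rfl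
    · exact hstep (by simp [hS]) (by simp [hS]) h₁₄ h₀₁ h₄₀.symm
    · exact hstep (by simp [hS]) (by simp [hS]) h₀₂ h₀₁.symm h₁₂
    · exact hstep (by simp [hS]) (by simp [hS]) h₁₃ h₁₂.symm h₂₃
    · exact hstep (by simp [hS]) (by simp [hS]) h₂₄ h₂₃.symm h₃₄
    · exact hstep (by simp [hS]) (by simp [hS]) (Ne.symm h₀₃) h₃₄.symm h₄₀
  have hwalk : ∀ {u u'} (p : H.Walk u u'), u ∈ S → u' ∈ S := by
    intro u u' p
    induction p with
    | nil => exact id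
    | cons h _ ih => exact fun hu => ih (hclosed _ hu _ h)
  have hsupp : (H.connectedComponentMk v₀).supp = S := by
    ext u
    rw [ConnectedComponent.mem_supp_iff, ConnectedComponent.eq]
    constructor
    · rintro ⟨p⟩
      exact hwalk p.reverse (hS.mpr (Or.inl rfl))
    · intro hu
      rcases hS.mp hu with rfl | rfl | rfl | rfl | rfl
      · rfl
      · exact h₀₁.reachable.symm
      · exact (h₀₁.reachable.trans h₁₂.reachable).symm
      · exact h₃₄.reachable.trans h₄₀.reachable
      · exact h₄₀.reachable
  have hcard : S.ncard = 5 := by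
    rw [show S = ↑[v₀, v₁, v₂, v₃, v₄].toFinset from (List.coe_toFinset _).symm,
      Set.ncard_coe_finset, List.toFinset_card_of_nodup hnd]
    rfl
  have heven := hE.2 v₀ ⟨v₁, h₀₁⟩
  rw [hsupp, hcard] at heven
  exact absurd heven (by decide)

end Cycles

inductive MEDPart
  | matching
  | cycles
  | stars
  deriving DecidableEq

namespace MEDPart

instance : Fintype MEDPart :=
  ⟨{matching, cycles, stars}, fun p => by cases p <;> simp⟩

/-- Up to order, the admissible profiles are `(matching, cycles, cycles)`,
`(stars, cycles, cycles)` and `(stars, stars, stars)`. -/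
def Admissible (p q r : MEDPart) : Prop :=
  [p, q, r].count matching ≤ 1 ∧
  ([p, q, r].count cycles = 0 ∨ [p, q, r].count cycles = 2) ∧
  ([p, q, r].count stars = 0 ∨ [p, q, r].count stars = 1 ∨ [p, q, r].count stars = 3)

instance (p q r : MEDPart) : Decidable (Admissible p q r) := by
  unfold Admissible; infer_instance

def IsCenter (p q r : MEDPart) : Prop := [p, q, r].count stars = 3

instance (p q r : MEDPart) : Decidable (IsCenter p q r) :=
  inferInstanceAs (Decidable (_ = _))

theorem IsCenter.right_eq_stars {p q r : MEDPart} (h : IsCenter p q r) : r = stars := by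
  cases p <;> cases q <;> cases r <;> first | rfl | exact absurd h (by decide)

/-- The arguments are the edge labels of a pendant subdivided `K₄` (`IsPendantSubdividedK4`).
Unless `s` is a center: a center at `c` (or `d`) violates the center condition there, a
center at `a` (or `b`) forces three cycle edges at the other one, and otherwise each of
`a, b, c, d, s` meets exactly two cycle edges, which by parity must form a 5-cycle. -/
theorem isCenter_of_subdividedK4 (ac ad as bc bd bs cd sw : MEDPart)
    (ha : Admissible ac ad as) (hb : Admissible bc bd bs) (hc : Admissible ac bc cd)
    (hd : Admissible ad bd cd) (hs : Admissible as bs sw)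
    (hc₁ : IsCenter ac bc cd →
      (if IsCenter ac ad as then 1 else 0) + (if IsCenter bc bd bs then 1 else 0) +
        (if IsCenter ad bd cd then 1 else 0) = 1)
    (hd₁ : IsCenter ad bd cd →
      (if IsCenter ac ad as then 1 else 0) + (if IsCenter bc bd bs then 1 else 0) +
        (if IsCenter ac bc cd then 1 else 0) = 1)
    (hcyc : ¬(ad = cycles ∧ cd = cycles ∧ bc = cycles ∧ bs = cycles ∧ as = cycles))
    (hcyc' : ¬(ac = cycles ∧ cd = cycles ∧ bd = cycles ∧ bs = cycles ∧ as = cycles)) :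
    IsCenter as bs sw := by
  revert ac ad as bc bd bs cd sw
  decide

end MEDPart

section Labels

variable {V : Type*} {G : SimpleGraph V} {E₁ E₂ E₃ : Set (Sym2 V)}

open Classical in
noncomputable def medLabel (E₁ E₂ : Set (Sym2 V)) (e : Sym2 V) : MEDPart :=
  if e ∈ E₁ then .matching else if e ∈ E₂ then .cycles else .stars

def medPart (E₁ E₂ E₃ : Set (Sym2 V)) : MEDPart → Set (Sym2 V)
  | .matching => E₁
  | .cycles => E₂
  | .stars => E₃

theorem IsMEDDecomposition.isMatchingSet (h : IsMEDDecomposition G E₁ E₂ E₃) :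
    IsMatchingSet E₁ := h.2.2.2.2.1

theorem IsMEDDecomposition.isEvenCyclesSet (h : IsMEDDecomposition G E₁ E₂ E₃) :
    IsEvenCyclesSet E₂ := h.2.2.2.2.2.1

theorem IsMEDDecomposition.isDoubleStarsSet (h : IsMEDDecomposition G E₁ E₂ E₃) :
    IsDoubleStarsSet G E₃ := h.2.2.2.2.2.2

theorem IsMEDDecomposition.medPart_subset (h : IsMEDDecomposition G E₁ E₂ E₃) (k : MEDPart) :
    medPart E₁ E₂ E₃ k ⊆ G.edgeSet := by
  rw [← h.1]
  cases k <;> intro e he <;> simp_all [medPart]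

theorem IsMEDDecomposition.medLabel_eq_iff (h : IsMEDDecomposition G E₁ E₂ E₃) {e : Sym2 V}
    (he : e ∈ G.edgeSet) (k : MEDPart) : medLabel E₁ E₂ e = k ↔ e ∈ medPart E₁ E₂ E₃ k := by
  obtain ⟨hU, h₁₂, h₁₃, h₂₃, -⟩ := h
  rw [← hU] at he
  clear hU
  have h₁₂' : e ∈ E₁ → e ∉ E₂ := fun h => Set.disjoint_left.mp h₁₂ h
  have h₁₃' : e ∈ E₁ → e ∉ E₃ := fun h => Set.disjoint_left.mp h₁₃ h
  have h₂₃' : e ∈ E₂ → e ∉ E₃ := fun h => Set.disjoint_left.mp h₂₃ h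
  by_cases e₁ : e ∈ E₁ <;> by_cases e₂ : e ∈ E₂ <;> cases k <;> simp_all [medLabel, medPart]

section Vertex

variable {v x y z : V}

theorem IsMEDDecomposition.edeg_medPart (h : IsMEDDecomposition G E₁ E₂ E₃)
    (hv : G.neighborSet v = {x, y, z}) (hxy : x ≠ y) (hxz : x ≠ z) (hyz : y ≠ z) (k : MEDPart) :
    edeg (fromEdgeSet (medPart E₁ E₂ E₃ k)) v =
      [medLabel E₁ E₂ s(v, x), medLabel E₁ E₂ s(v, y), medLabel E₁ E₂ s(v, z)].count k := by
  have hnbr : (fromEdgeSet (medPart E₁ E₂ E₃ k)).neighborSet v =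
      {u ∈ ({x, y, z} : Set V) | medLabel E₁ E₂ s(v, u) = k} := by
    rw [neighborSet_fromEdgeSet_of_subset (h.medPart_subset k), hv]
    ext u
    refine and_congr_right fun hu => (h.medLabel_eq_iff ?_ k).symm
    rw [← hv] at hu
    exact hu
  rw [edeg, hnbr, Set.ncard_sep_triple hxy hxz hyz]
  simp only [List.count_cons, List.count_nil, beq_iff_eq]
  omega

theorem IsMEDDecomposition.edeg_stars (h : IsMEDDecomposition G E₁ E₂ E₃)
    (hv : G.neighborSet v = {x, y, z}) (hxy : x ≠ y) (hxz : x ≠ z) (hyz : y ≠ z) :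
    edeg (fromEdgeSet E₃) v =
      [medLabel E₁ E₂ s(v, x), medLabel E₁ E₂ s(v, y), medLabel E₁ E₂ s(v, z)].count .stars :=
  h.edeg_medPart hv hxy hxz hyz .stars

theorem IsMEDDecomposition.admissible (h : IsMEDDecomposition G E₁ E₂ E₃)
    (hv : G.neighborSet v = {x, y, z}) (hxy : x ≠ y) (hxz : x ≠ z) (hyz : y ≠ z) :
    MEDPart.Admissible (medLabel E₁ E₂ s(v, x)) (medLabel E₁ E₂ s(v, y))
      (medLabel E₁ E₂ s(v, z)) := by
  have hdeg := h.edeg_medPart hv hxy hxz hyz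
  refine ⟨?_, ?_, ?_⟩
  · rw [← hdeg .matching]; exact h.isMatchingSet.edeg_le_one v
  · rw [← hdeg .cycles]; exact h.isEvenCyclesSet.edeg_eq_zero_or_two v
  · rw [← hdeg .stars]; exact h.isDoubleStarsSet.edeg_eq_zero_or_one_or_three v

theorem IsMEDDecomposition.center_count (h : IsMEDDecomposition G E₁ E₂ E₃)
    (hv : G.neighborSet v = {x, y, z}) (hxy : x ≠ y) (hxz : x ≠ z) (hyz : y ≠ z)
    (hv₃ : edeg (fromEdgeSet E₃) v = 3) :
    (if edeg (fromEdgeSet E₃) x = 3 then 1 else 0) + (if edeg (fromEdgeSet E₃) y = 3 then 1 else 0)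
      + (if edeg (fromEdgeSet E₃) z = 3 then 1 else 0) = 1 := by
  have hsupp : v ∈ (fromEdgeSet E₃).support :=
    Set.nonempty_of_ncard_ne_zero (s := (fromEdgeSet E₃).neighborSet v)
      (by unfold edeg at hv₃; omega)
  have hG : (G.neighborSet v).ncard = 3 := Set.ncard_eq_three.mpr ⟨x, y, z, hxy, hxz, hyz, hv⟩
  have hsub : (fromEdgeSet E₃).neighborSet v ⊆ G.neighborSet v := by
    have hE₃ : E₃ ⊆ G.edgeSet := h.medPart_subset .stars
    rw [neighborSet_fromEdgeSet_of_subset hE₃]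
    exact fun u hu => hu.1
  have hnbr : (fromEdgeSet E₃).neighborSet v = {x, y, z} := by
    rw [← hv]
    refine Set.eq_of_subset_of_ncard_le hsub ?_ (Set.finite_of_ncard_ne_zero (by omega))
    rw [hG]
    exact hv₃.ge
  have hcenter := h.isDoubleStarsSet.2.1 v hsupp hv₃
  rwa [hnbr, Set.ncard_sep_triple hxy hxz hyz] at hcenter

end Vertex

end Labels

section Gadget

variable {V : Type*}

/-- `a b c d s` span a copy of `K₄` with the edge `ab` subdivided by `s`, attached to the rest
of `G` only through the edge `sw`. -/
structure IsPendantSubdividedK4 (G : SimpleGraph V) (a b c d s w : V) : Prop where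
  nodup : [a, b, c, d, s, w].Nodup
  neighborSet_a : G.neighborSet a = {c, d, s}
  neighborSet_b : G.neighborSet b = {c, d, s}
  neighborSet_c : G.neighborSet c = {a, b, d}
  neighborSet_d : G.neighborSet d = {a, b, c}
  neighborSet_s : G.neighborSet s = {a, b, w}

variable {G : SimpleGraph V} {E₁ E₂ E₃ : Set (Sym2 V)} {a b c d s w : V}

theorem IsMEDDecomposition.adj_of_medLabel_eq (h : IsMEDDecomposition G E₁ E₂ E₃) {u u' : V}
    (hu : G.Adj u u') {k : MEDPart} (hl : medLabel E₁ E₂ s(u, u') = k) :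
    (fromEdgeSet (medPart E₁ E₂ E₃ k)).Adj u u' :=
  (fromEdgeSet_adj _).mpr ⟨(h.medLabel_eq_iff (G.mem_edgeSet.mpr hu) k).mp hl, hu.ne⟩

theorem IsMEDDecomposition.not_cycles_pentagons (h : IsMEDDecomposition G E₁ E₂ E₃)
    (hK : IsPendantSubdividedK4 G a b c d s w) :
    let ℓ := medLabel E₁ E₂
    ¬(ℓ s(a, d) = .cycles ∧ ℓ s(c, d) = .cycles ∧ ℓ s(b, c) = .cycles ∧ ℓ s(b, s) = .cycles ∧
        ℓ s(a, s) = .cycles) ∧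
      ¬(ℓ s(a, c) = .cycles ∧ ℓ s(c, d) = .cycles ∧ ℓ s(b, d) = .cycles ∧
        ℓ s(b, s) = .cycles ∧ ℓ s(a, s) = .cycles) := by
  obtain ⟨hnd, ha, hb, hc, -, -⟩ := hK
  have hcyc : ∀ {u u'}, u' ∈ G.neighborSet u → medLabel E₁ E₂ s(u, u') = .cycles →
      (fromEdgeSet E₂).Adj u u' := fun hu => h.adj_of_medLabel_eq hu
  simp only [List.nodup_cons, List.mem_cons, List.not_mem_nil, not_or] at hnd
  constructor
  · rintro ⟨l₁, l₂, l₃, l₄, l₅⟩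
    exact h.isEvenCyclesSet.not_five_cycle (v₀ := a) (v₁ := d) (v₂ := c) (v₃ := b) (v₄ := s)
      (by simp_all [eq_comm]) (hcyc (by simp [ha]) l₁) (hcyc (by simp [hc]) l₂).symm
      (hcyc (by simp [hb]) l₃).symm (hcyc (by simp [hb]) l₄) (hcyc (by simp [ha]) l₅).symm
  · rintro ⟨l₁, l₂, l₃, l₄, l₅⟩
    exact h.isEvenCyclesSet.not_five_cycle (v₀ := a) (v₁ := c) (v₂ := d) (v₃ := b) (v₄ := s)
      (by simp_all [eq_comm]) (hcyc (by simp [ha]) l₁) (hcyc (by simp [hc]) l₂)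
      (hcyc (by simp [hb]) l₃).symm (hcyc (by simp [hb]) l₄) (hcyc (by simp [ha]) l₅).symm

theorem IsMEDDecomposition.isCenter_of_isPendantSubdividedK4
    (h : IsMEDDecomposition G E₁ E₂ E₃) (hK : IsPendantSubdividedK4 G a b c d s w) :
    (fromEdgeSet E₃).Adj w s ∧ edeg (fromEdgeSet E₃) s = 3 := by
  obtain ⟨hcyc, hcyc'⟩ := h.not_cycles_pentagons hK
  obtain ⟨hnd, ha, hb, hc, hd, hs⟩ := hK
  simp only [List.nodup_cons, List.mem_cons, List.not_mem_nil, not_or] at hnd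
  obtain ⟨⟨hab, hac, had, -, haw, -⟩, ⟨hbc, hbd, -, hbw, -⟩, ⟨hcd, hcs, -, -⟩,
    ⟨hds, -, -⟩, ⟨hsw, -⟩, -⟩ := hnd
  set ℓ := medLabel E₁ E₂
  have hA := h.edeg_stars ha hcd hcs hds
  have hB := h.edeg_stars hb hcd hcs hds
  have hC := h.edeg_stars hc hab had hbd
  have hD := h.edeg_stars hd hab hac hbc
  have hS := h.edeg_stars hs hab haw hbw
  have admC := h.admissible hc hab had hbd
  have admD := h.admissible hd hab hac hbc
  have admS := h.admissible hs hab haw hbw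
  simp only [Sym2.eq_swap (a := c) (b := a), Sym2.eq_swap (a := c) (b := b),
    Sym2.eq_swap (a := d) (b := a), Sym2.eq_swap (a := d) (b := b),
    Sym2.eq_swap (a := d) (b := c), Sym2.eq_swap (a := s) (b := a),
    Sym2.eq_swap (a := s) (b := b)] at hC hD hS admC admD admS
  have key := MEDPart.isCenter_of_subdividedK4 (ℓ s(a, c)) (ℓ s(a, d)) (ℓ s(a, s))
    (ℓ s(b, c)) (ℓ s(b, d)) (ℓ s(b, s)) (ℓ s(c, d)) (ℓ s(s, w))
    (h.admissible ha hcd hcs hds) (h.admissible hb hcd hcs hds) admC admD admS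
    (fun hc₃ => by
      have := h.center_count hc hab had hbd (hC.trans hc₃)
      rwa [hA, hB, hD] at this)
    (fun hd₃ => by
      have := h.center_count hd hab hac hbc (hD.trans hd₃)
      rwa [hA, hB, hC] at this)
    hcyc hcyc'
  have hws : G.Adj w s := G.adj_symm (show w ∈ G.neighborSet s by simp [hs])
  refine ⟨h.adj_of_medLabel_eq (k := .stars) hws ?_, hS.trans key⟩
  rw [Sym2.eq_swap]
  exact key.right_eq_stars

end Gadget

set_option synthInstance.maxSize 10000 in
set_option synthInstance.maxHeartbeats 400000 in
instance : DecidableRel Gstar.Adj := by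
  unfold Gstar; infer_instance

theorem Gstar_edeg (v : Fin 16) : edeg Gstar v = 3 := by
  rw [edeg_eq_degree]
  revert v
  decide

theorem Gstar_isPendantSubdividedK4 :
    IsPendantSubdividedK4 Gstar 0 1 2 3 4 15 ∧ IsPendantSubdividedK4 Gstar 5 6 7 8 9 15 ∧
      IsPendantSubdividedK4 Gstar 10 11 12 13 14 15 := by
  refine ⟨⟨?_, ?_, ?_, ?_, ?_, ?_⟩, ⟨?_, ?_, ?_, ?_, ?_, ?_⟩, ⟨?_, ?_, ?_, ?_, ?_, ?_⟩⟩ <;>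
    first
    | decide
    | ext x
      simp only [mem_neighborSet, Set.mem_insert_iff, Set.mem_singleton_iff]
      revert x
      decide

/-- `G*` is 3-regular and has no MED decomposition. -/
theorem stmt13 :
    (∀ v, edeg Gstar v = 3) ∧
    ¬ ∃ E₁ E₂ E₃, IsMEDDecomposition Gstar E₁ E₂ E₃ := by
  refine ⟨Gstar_edeg, ?_⟩
  rintro ⟨E₁, E₂, E₃, h⟩
  obtain ⟨K₀, K₁, K₂⟩ := Gstar_isPendantSubdividedK4
  obtain ⟨a₀, c₀⟩ := h.isCenter_of_isPendantSubdividedK4 K₀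
  obtain ⟨a₁, c₁⟩ := h.isCenter_of_isPendantSubdividedK4 K₁
  obtain ⟨a₂, c₂⟩ := h.isCenter_of_isPendantSubdividedK4 K₂
  exact h.isDoubleStarsSet.not_three_center_neighbors (by decide) (by decide) (by decide)
    a₀ a₁ a₂ c₀ c₁ c₂
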